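/- arXiv:2502.01263 — 10 statements merged into one kernel-verified Lean document; each statement's English description precedes it below -/
import Mathlib

section
/- Let u : ℂ → ℂ^N and let x₀ ∈ ℂ with x₀ ≠ a_i for all i = 1,…,q. Assume u has derivative (S + Σ_{i=1}^q (x₀ − a_i)⁻¹ A_i)·u(x₀) at x₀ (in the sense of HasDerivAt). For 1 ≤ i ≤ q define U_i(x) = (x − a_i)⁻¹ u(x). Then for each i the function U_i has at x₀ the derivative S·U_i(x₀) + (x₀ − a_i)⁻¹ (Σ_{k=1}^q A_k·U_k(x₀) − U_i(x₀)); that is, the tuple U = (U_1,…,U_q) satisfies the Birkhoff–Okubo normal form (x − T) dU/dx = (A − I + S^{⊕q}(x − T)) U at x₀, where T = diag(a_1 I_N, …, a_q I_N), A is the q×q block matrix each of whose block rows is (A_1 … A_q), and S^{⊕q} = diag(S,…,S). -/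
open Matrix

/-
Each `U i = (x - a i)⁻¹ u` is differentiated by the product rule. The derivative of `u`
contributes `(x₀ - a i)⁻¹ (S + Σ_k (x₀ - a k)⁻¹ A k) u = S U i + (x₀ - a i)⁻¹ Σ_k A k U k`,
since the scalar `(x₀ - a k)⁻¹` can be moved onto `u`, turning it into `U k`; the derivative
of the prefactor contributes `-(x₀ - a i)⁻² u = -(x₀ - a i)⁻¹ U i`.
-/

theorem HasDerivAt.inv_sub_smul {𝕜 E : Type*} [NontriviallyNormedField 𝕜]
    [NormedAddCommGroup E] [NormedSpace 𝕜 E] {u : 𝕜 → E} {u' : E} {x₀ c : 𝕜}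
    (hu : HasDerivAt u u' x₀) (hc : x₀ ≠ c) :
    HasDerivAt (fun x => (x - c)⁻¹ • u x) ((x₀ - c)⁻¹ • (u' - (x₀ - c)⁻¹ • u x₀)) x₀ := by
  have hne : x₀ - c ≠ 0 := sub_ne_zero.mpr hc
  have hinv : HasDerivAt (fun x => (x - c)⁻¹) (-((x₀ - c) ^ 2)⁻¹) x₀ :=
    (hasDerivAt_inv hne).comp_sub_const x₀ c
  refine (hinv.smul hu).congr_deriv ?_
  rw [smul_sub, smul_smul, ← mul_inv, ← sq, neg_smul, ← sub_eq_add_neg]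

theorem Matrix.add_sum_smul_mulVec {ι n R : Type*} [Fintype ι] [Fintype n] [CommSemiring R]
    (S : Matrix n n R) (A : ι → Matrix n n R) (c : ι → R) (v : n → R) :
    (S + ∑ k, c k • A k) *ᵥ v = S *ᵥ v + ∑ k, A k *ᵥ (c k • v) := by
  simp only [add_mulVec, sum_mulVec, smul_mulVec, mulVec_smul]

theorem birkhoff_okubo_extension_general
    (N q : ℕ)
    (S : Matrix (Fin N) (Fin N) ℂ) (A : Fin q → Matrix (Fin N) (Fin N) ℂ)
    (a : Fin q → ℂ)
    (u : ℂ → Fin N → ℂ) (x₀ : ℂ)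
    (hx₀ : ∀ i, x₀ ≠ a i)
    (hu : HasDerivAt u ((S + ∑ i, (x₀ - a i)⁻¹ • A i) *ᵥ u x₀) x₀)
    (U : Fin q → ℂ → Fin N → ℂ)
    (hU : ∀ i x, U i x = (x - a i)⁻¹ • u x) :
    ∀ i, HasDerivAt (U i)
      (S *ᵥ U i x₀ + (x₀ - a i)⁻¹ • ((∑ k, (A k) *ᵥ U k x₀) - U i x₀)) x₀ := by
  intro i
  rw [show U i = fun x => (x - a i)⁻¹ • u x from funext (hU i)]
  refine (hu.inv_sub_smul (hx₀ i)).congr_deriv ?_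
  simp only [hU, add_sum_smul_mulVec, mulVec_smul, smul_sub, smul_add, add_sub_assoc]

/-- Birkhoff–Okubo extension, one variable.
If `u` solves `du/dx = (S + Σ_i (x - a i)⁻¹ A_i) u` at `x₀` (with `x₀ ≠ a i` for all `i`),
then each `U i x = (x - a i)⁻¹ u x` satisfies, at `x₀`, the `i`-th row of the
Birkhoff–Okubo normal form `(x - T) dU/dx = (A - I + S^{⊕q}(x - T)) U`. -/
theorem birkhoff_okubo_extension
    (N q : ℕ) (hN : 1 ≤ N) (hq : 1 ≤ q)
    (S : Matrix (Fin N) (Fin N) ℂ) (A : Fin q → Matrix (Fin N) (Fin N) ℂ)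
    (a : Fin q → ℂ)
    (u : ℂ → Fin N → ℂ) (x₀ : ℂ)
    (hx₀ : ∀ i, x₀ ≠ a i)
    (hu : HasDerivAt u ((S + ∑ i, (x₀ - a i)⁻¹ • A i) *ᵥ u x₀) x₀)
    (U : Fin q → ℂ → Fin N → ℂ)
    (hU : ∀ i x, U i x = (x - a i)⁻¹ • u x) :
    ∀ i, HasDerivAt (U i)
      (S *ᵥ U i x₀ + (x₀ - a i)⁻¹ • ((∑ k, (A k) *ᵥ U k x₀) - U i x₀)) x₀ :=
  birkhoff_okubo_extension_general N q S A a u x₀ hx₀ hu U hU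
end

section
/- (Proposition 4.2) The linear map φ satisfies φ ∘ G_0 = S ∘ φ (i.e. φ(G_0 v) = S·φ(v) for all v ∈ ((ℂ^N)^q)^{q̂}) and φ ∘ G_i = A_i ∘ φ for every i = 1, …, q. -/
open Matrix

private lemma mulVec_sum' {m n ι : Type*} [Fintype n] (s : Finset ι)
    (M : Matrix m n ℂ) (f : ι → n → ℂ) :
    M *ᵥ (∑ i ∈ s, f i) = ∑ i ∈ s, M *ᵥ f i :=
  map_sum M.mulVecLin f s

private lemma sum_mulVec' {m n ι : Type*} [Fintype n] (s : Finset ι)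
    (M : ι → Matrix m n ℂ) (w : n → ℂ) :
    (∑ i ∈ s, M i) *ᵥ w = ∑ i ∈ s, M i *ᵥ w := by
  ext x
  simp only [Matrix.mulVec, dotProduct, Finset.sum_apply, Matrix.sum_apply,
    Finset.sum_mul]
  exact Finset.sum_comm

/-- Proposition 4.2.  The linear map `φ` intertwines `G_0` with `S`
and each `G_i` with `A_i`: `φ ∘ G_0 = S ∘ φ` and `φ ∘ G_i = A_i ∘ φ`. -/
theorem varphi_is_morphism
    (N q qh : ℕ) (hN : 1 ≤ N) (hq : 1 ≤ q) (hqh : 1 ≤ qh)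
    (A : Fin q → Matrix (Fin N) (Fin N) ℂ) (α : Fin qh → ℂ)
    (E : Fin qh → Matrix (Fin N) (Fin N) ℂ)
    (hE_orth : ∀ j k, j ≠ k → E j * E k = 0)
    (hE_idem : ∀ j, E j * E j = E j)
    (hE_sum : ∑ j, E j = 1)
    (S : Matrix (Fin N) (Fin N) ℂ)
    (hS : S = ∑ j, α j • E j)
    (φ : (Fin qh → Fin q → Fin N → ℂ) →ₗ[ℂ] (Fin N → ℂ))
    (hφ : ∀ v, φ v = ∑ j, (E j) *ᵥ (∑ k, (A k) *ᵥ v j k))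
    (G0 : (Fin qh → Fin q → Fin N → ℂ) →ₗ[ℂ] (Fin qh → Fin q → Fin N → ℂ))
    (hG0 : ∀ v j, G0 v j = α j • v j)
    (G : Fin q → ((Fin qh → Fin q → Fin N → ℂ) →ₗ[ℂ] (Fin qh → Fin q → Fin N → ℂ)))
    (hG : ∀ i v j m, G i v j m = if m = i then φ v else 0) :
    (∀ v, φ (G0 v) = S *ᵥ φ v) ∧ (∀ i v, φ (G i v) = (A i) *ᵥ φ v) := by
  have key : ∀ (u : Fin qh → Fin N → ℂ) (j : Fin qh),
      E j *ᵥ (∑ j', E j' *ᵥ u j') = E j *ᵥ u j := by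
    intro u j
    rw [mulVec_sum']
    have : ∀ j', E j *ᵥ (E j' *ᵥ u j') = (E j * E j') *ᵥ u j' := by
      intro j'; rw [Matrix.mulVec_mulVec]
    simp_rw [this]
    rw [Finset.sum_eq_single j]
    · rw [hE_idem]
    · intro b _ hb; rw [hE_orth j b (Ne.symm hb)]; simp
    · intro h; exact absurd (Finset.mem_univ j) h
  constructor
  · intro v
    rw [hφ (G0 v), hφ v, hS, sum_mulVec']
    refine Finset.sum_congr rfl fun j _ => ?_
    rw [Matrix.smul_mulVec, key]
    simp_rw [hG0, Pi.smul_apply, Matrix.mulVec_smul, ← Finset.smul_sum,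
      Matrix.mulVec_smul]
  · intro i v
    rw [hφ (G i v)]
    have h1 : ∀ j, (∑ k, A k *ᵥ (G i v) j k) = A i *ᵥ φ v := by
      intro j
      rw [Finset.sum_eq_single i]
      · congr 1; ext m; rw [hG]; simp
      · intro b _ hb
        have : (G i v) j b = 0 := by ext m; rw [hG]; simp [hb]
        rw [this, Matrix.mulVec_zero]
      · intro h; exact absurd (Finset.mem_univ i) h
    simp_rw [h1]
    rw [← sum_mulVec', hE_sum, Matrix.one_mulVec]
end

section
/- (Lemma 4.3, surjectivity part) Assume that for every j = 1, …, q̂ one has Σ_{i=1}^q im A_i + im(S − α_j I) = ℂ^N. Then φ is surjective: im φ = ℂ^N. -/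
open Matrix

/-- Lemma 4.3, surjectivity part.  If for every `j` one has
`Σ_i im A_i + im (S − α_j I) = ℂ^N`, then `φ` is surjective. -/
theorem varphi_surjective
    (N q qh : ℕ) (hN : 1 ≤ N) (hq : 1 ≤ q) (hqh : 1 ≤ qh)
    (A : Fin q → Matrix (Fin N) (Fin N) ℂ) (α : Fin qh → ℂ)
    (E : Fin qh → Matrix (Fin N) (Fin N) ℂ)
    (hE_orth : ∀ j k, j ≠ k → E j * E k = 0)
    (hE_idem : ∀ j, E j * E j = E j)
    (hE_sum : ∑ j, E j = 1)
    (S : Matrix (Fin N) (Fin N) ℂ)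
    (hS : S = ∑ j, α j • E j)
    (hrange : ∀ j, (⨆ i, LinearMap.range (A i).mulVecLin) ⊔
        LinearMap.range (S - α j • (1 : Matrix (Fin N) (Fin N) ℂ)).mulVecLin = ⊤)
    (φ : (Fin qh → Fin q → Fin N → ℂ) →ₗ[ℂ] (Fin N → ℂ))
    (hφ : ∀ v, φ v = ∑ j, (E j) *ᵥ (∑ k, (A k) *ᵥ v j k)) :
    LinearMap.range φ = ⊤ := by
  rw [LinearMap.range_eq_top]
  intro x
  -- E j annihilates S - α j • 1
  have hker : ∀ j, E j * (S - α j • (1 : Matrix (Fin N) (Fin N) ℂ)) = 0 := by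
    intro j
    rw [mul_sub, hS, Finset.mul_sum]
    have h1 : ∀ k ∈ Finset.univ, E j * (α k • E k) =
        if k = j then α j • E j else 0 := by
      intro k _
      by_cases h : k = j
      · subst h; rw [mul_smul_comm, hE_idem, if_pos rfl]
      · rw [mul_smul_comm, hE_orth j k (Ne.symm h), smul_zero, if_neg h]
    rw [Finset.sum_congr rfl h1, Finset.sum_ite_eq' Finset.univ j,
      if_pos (Finset.mem_univ j), mul_smul_comm, mul_one, sub_self]
  -- elements of the iSup of ranges are sums
  have key : ∀ a, a ∈ (⨆ i, LinearMap.range (A i).mulVecLin) →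
      ∃ w : Fin q → Fin N → ℂ, a = ∑ i, A i *ᵥ w i := by
    intro a ha
    set ψ : (Fin q → Fin N → ℂ) →ₗ[ℂ] (Fin N → ℂ) :=
      LinearMap.lsum ℂ (fun _ : Fin q => Fin N → ℂ) ℂ (fun i => (A i).mulVecLin)
    have hle : (⨆ i, LinearMap.range (A i).mulVecLin) ≤ LinearMap.range ψ := by
      refine iSup_le fun i => ?_
      rintro y ⟨u, rfl⟩
      refine ⟨Pi.single i u, ?_⟩
      simp only [ψ, LinearMap.lsum_apply, LinearMap.coe_sum, LinearMap.coe_comp,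
        LinearMap.coe_proj, Finset.sum_apply, Function.comp_apply]
      rw [Finset.sum_eq_single i]
      · simp
      · intro k _ hk
        simp [Pi.single_eq_of_ne hk]
      · simp
    obtain ⟨w, hw⟩ := hle ha
    refine ⟨w, ?_⟩
    rw [← hw]
    simp [ψ, LinearMap.lsum_apply, mulVecLin_apply]
  -- for each j, decompose x
  have hdecomp : ∀ j, ∃ (w : Fin q → Fin N → ℂ) (u : Fin N → ℂ),
      x = (∑ i, A i *ᵥ w i) + (S - α j • (1 : Matrix (Fin N) (Fin N) ℂ)) *ᵥ u := by
    intro j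
    have hx : x ∈ (⨆ i, LinearMap.range (A i).mulVecLin) ⊔
        LinearMap.range (S - α j • (1 : Matrix (Fin N) (Fin N) ℂ)).mulVecLin := by
      rw [hrange j]; trivial
    obtain ⟨a, ha, b, hb, hab⟩ := Submodule.mem_sup.mp hx
    obtain ⟨u, hu⟩ := hb
    obtain ⟨w, hw⟩ := key a ha
    exact ⟨w, u, by rw [← hab, hw, ← hu]; rfl⟩
  choose w u hwu using hdecomp
  refine ⟨fun j => w j, ?_⟩
  rw [hφ]
  have hterm : ∀ j, E j *ᵥ (∑ k, A k *ᵥ w j k) = E j *ᵥ x := by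
    intro j
    have : (∑ k, A k *ᵥ w j k) = x - (S - α j • (1 : Matrix (Fin N) (Fin N) ℂ)) *ᵥ u j := by
      rw [hwu j]; ring
    rw [this, mulVec_sub, mulVec_mulVec, hker j, zero_mulVec, sub_zero]
  calc ∑ j, E j *ᵥ (∑ k, A k *ᵥ w j k) = ∑ j, E j *ᵥ x := by
        exact Finset.sum_congr rfl fun j _ => hterm j
    _ = (∑ j, E j) *ᵥ x := by
        ext i
        simp only [Finset.sum_apply, mulVec, dotProduct, Finset.sum_apply, Finset.sum_mul]
        rw [Finset.sum_comm]
        simp [Matrix.sum_apply, Finset.sum_mul]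
    _ = x := by rw [hE_sum, one_mulVec]
end

section
/- (Corollary: the isomorphism φ̄) Assume that for every j = 1, …, q̂ one has Σ_{i=1}^q im A_i + im(S − α_j I) = ℂ^N. Then φ descends to a linear isomorphism φ̄ : ((ℂ^N)^q)^{q̂}/K' → ℂ^N with φ̄ ∘ π = φ (π the quotient map), and φ̄ intertwines the induced endomorphisms with the original data: φ̄(Ḡ_0 w) = S·φ̄(w) and φ̄(Ḡ_i w) = A_i·φ̄(w) for all w in the quotient, where Ḡ_0 and Ḡ_i denote the endomorphisms of ((ℂ^N)^q)^{q̂}/K' induced by G_0 and G_i (well defined since K' is G_0- and G_i-invariant). -/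
open Matrix

/-- Corollary: the isomorphism `φ̄`.  Under the surjectivity
condition, `φ` descends to a linear isomorphism
`φ̄ : ((ℂ^N)^q)^{q̂}/K' ≃ ℂ^N` with `φ̄ ∘ π = φ`, intertwining the induced
endomorphisms `Ḡ_0, Ḡ_i` with `S, A_i`. -/
theorem varphi_bar_isomorphism
    (N q qh : ℕ) (hN : 1 ≤ N) (hq : 1 ≤ q) (hqh : 1 ≤ qh)
    (A : Fin q → Matrix (Fin N) (Fin N) ℂ) (α : Fin qh → ℂ)
    (E : Fin qh → Matrix (Fin N) (Fin N) ℂ)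
    (hE_orth : ∀ j k, j ≠ k → E j * E k = 0)
    (hE_idem : ∀ j, E j * E j = E j)
    (hE_sum : ∑ j, E j = 1)
    (S : Matrix (Fin N) (Fin N) ℂ)
    (hS : S = ∑ j, α j • E j)
    (hrange : ∀ j, (⨆ i, LinearMap.range (A i).mulVecLin) ⊔
        LinearMap.range (S - α j • (1 : Matrix (Fin N) (Fin N) ℂ)).mulVecLin = ⊤)
    (φ : (Fin qh → Fin q → Fin N → ℂ) →ₗ[ℂ] (Fin N → ℂ))
    (hφ : ∀ v, φ v = ∑ j, (E j) *ᵥ (∑ k, (A k) *ᵥ v j k))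
    (G0 : (Fin qh → Fin q → Fin N → ℂ) →ₗ[ℂ] (Fin qh → Fin q → Fin N → ℂ))
    (hG0 : ∀ v j, G0 v j = α j • v j)
    (G : Fin q → ((Fin qh → Fin q → Fin N → ℂ) →ₗ[ℂ] (Fin qh → Fin q → Fin N → ℂ)))
    (hG : ∀ i v j m, G i v j m = if m = i then φ v else 0)
    (K' : Submodule ℂ (Fin qh → Fin q → Fin N → ℂ))
    (hK' : ∀ v, v ∈ K' ↔ ∀ j, (E j) *ᵥ (∑ k, (A k) *ᵥ v j k) = 0)
    (G0bar : ((Fin qh → Fin q → Fin N → ℂ) ⧸ K') →ₗ[ℂ] ((Fin qh → Fin q → Fin N → ℂ) ⧸ K'))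
    (hG0bar : ∀ v, G0bar (K'.mkQ v) = K'.mkQ (G0 v))
    (Gbar : Fin q →
      (((Fin qh → Fin q → Fin N → ℂ) ⧸ K') →ₗ[ℂ] ((Fin qh → Fin q → Fin N → ℂ) ⧸ K')))
    (hGbar : ∀ i v, Gbar i (K'.mkQ v) = K'.mkQ (G i v)) :
    ∃ φbar : ((Fin qh → Fin q → Fin N → ℂ) ⧸ K') ≃ₗ[ℂ] (Fin N → ℂ),
      (∀ v, φbar (K'.mkQ v) = φ v) ∧
      (∀ w, φbar (G0bar w) = S *ᵥ φbar w) ∧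
      (∀ i w, φbar (Gbar i w) = (A i) *ᵥ φbar w) := by
  classical
  have hsumMul : ∀ (f : Fin qh → Matrix (Fin N) (Fin N) ℂ) (x : Fin N → ℂ),
      (∑ j, f j) *ᵥ x = ∑ j, f j *ᵥ x := by
    intro f x
    exact map_sum (Matrix.mulVec.addMonoidHomLeft x) f Finset.univ
  have hmulSum : ∀ (M : Matrix (Fin N) (Fin N) ℂ) (g : Fin qh → Fin N → ℂ),
      M *ᵥ (∑ j, g j) = ∑ j, M *ᵥ g j := by
    intro M g
    have h := map_sum M.mulVecLin g Finset.univ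
    simpa only [Matrix.mulVecLin_apply] using h
  -- K' = ker φ
  have hker : K' = LinearMap.ker φ := by
    ext v
    rw [hK', LinearMap.mem_ker, hφ]
    constructor
    · intro h; simp [h]
    · intro h j
      have h2 := congrArg (fun x => E j *ᵥ x) h
      simp only [Matrix.mulVec_zero] at h2
      rw [hmulSum] at h2
      simp only [Matrix.mulVec_mulVec] at h2
      rw [Finset.sum_eq_single j (fun b _ hb => by
        rw [hE_orth j b (Ne.symm hb), Matrix.zero_mulVec]) (by simp)] at h2
      rw [hE_idem] at h2
      exact h2
  -- the summed map L
  set L : (Fin q → Fin N → ℂ) →ₗ[ℂ] (Fin N → ℂ) :=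
    ∑ k, (A k).mulVecLin.comp (LinearMap.proj k) with hL
  have hLapp : ∀ u, L u = ∑ k, A k *ᵥ u k := by
    intro u; simp [hL, LinearMap.sum_apply]
  have hLran : ∀ i, LinearMap.range (A i).mulVecLin ≤ LinearMap.range L := by
    intro i
    rintro a ⟨w, rfl⟩
    refine ⟨Pi.single i w, ?_⟩
    rw [hLapp]
    rw [Finset.sum_eq_single i (fun b _ hb => by simp [Pi.single_eq_of_ne hb]) (by simp)]
    simp
  -- E j kills S - α j
  have hEjS : ∀ j, E j * (S - α j • (1 : Matrix (Fin N) (Fin N) ℂ)) = 0 := by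
    intro j
    rw [Matrix.mul_sub, hS, Finset.mul_sum]
    have h1 : ∑ k, E j * (α k • E k) = α j • E j := by
      rw [Finset.sum_eq_single j (fun b _ hb => by
        rw [Matrix.mul_smul, hE_orth j b (Ne.symm hb), smul_zero]) (by simp)]
      rw [Matrix.mul_smul, hE_idem]
    rw [h1]
    simp [Matrix.mul_smul]
  -- surjectivity
  have hsurj : Function.Surjective φ := by
    intro x
    have hchoice : ∀ j : Fin qh, ∃ u : Fin q → Fin N → ℂ,
        E j *ᵥ x = E j *ᵥ (∑ k, A k *ᵥ u k) := by
      intro j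
      have hmem : x ∈ LinearMap.range L ⊔
          LinearMap.range (S - α j • (1 : Matrix (Fin N) (Fin N) ℂ)).mulVecLin := by
        have hle : (⊤ : Submodule ℂ (Fin N → ℂ)) ≤ LinearMap.range L ⊔
            LinearMap.range (S - α j • (1 : Matrix (Fin N) (Fin N) ℂ)).mulVecLin := by
          rw [← hrange j]
          exact sup_le_sup_right (iSup_le hLran) _
        exact hle Submodule.mem_top
      obtain ⟨a, ha, b, hb, hab⟩ := Submodule.mem_sup.mp hmem
      obtain ⟨u, rfl⟩ := ha
      obtain ⟨w, rfl⟩ := hb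
      refine ⟨u, ?_⟩
      rw [← hab, hLapp, Matrix.mulVec_add]
      have hz : E j *ᵥ ((S - α j • (1 : Matrix (Fin N) (Fin N) ℂ)).mulVecLin w) = 0 := by
        rw [Matrix.mulVecLin_apply, Matrix.mulVec_mulVec, hEjS j, Matrix.zero_mulVec]
      rw [hz, add_zero]
    choose u hu using hchoice
    refine ⟨fun j => u j, ?_⟩
    rw [hφ]
    have h4 : ∀ j : Fin qh, E j *ᵥ (∑ k, A k *ᵥ u j k) = E j *ᵥ x := fun j => (hu j).symm
    rw [Finset.sum_congr rfl (fun j _ => h4 j), ← hsumMul, hE_sum, Matrix.one_mulVec]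
  -- intertwining identities at the level of φ
  have hφG0 : ∀ v, φ (G0 v) = S *ᵥ φ v := by
    intro v
    rw [hφ, hφ]
    have lhs : ∀ j : Fin qh, E j *ᵥ (∑ k, A k *ᵥ (G0 v) j k)
        = α j • (E j *ᵥ ∑ k, A k *ᵥ v j k) := by
      intro j
      have h5 : ∀ k : Fin q, A k *ᵥ (G0 v) j k = α j • (A k *ᵥ v j k) := by
        intro k; rw [hG0]; simp [Matrix.mulVec_smul]
      rw [Finset.sum_congr rfl (fun k _ => h5 k), ← Finset.smul_sum, Matrix.mulVec_smul]
    rw [Finset.sum_congr rfl (fun j _ => lhs j), hmulSum]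
    refine Finset.sum_congr rfl (fun j _ => ?_)
    have hSE : S * E j = α j • E j := by
      rw [hS, Finset.sum_mul]
      rw [Finset.sum_eq_single j (fun b _ hb => by
        rw [Matrix.smul_mul, hE_orth b j hb, smul_zero]) (by simp)]
      rw [Matrix.smul_mul, hE_idem]
    rw [Matrix.mulVec_mulVec, hSE, Matrix.smul_mulVec]
  have hφG : ∀ i v, φ (G i v) = A i *ᵥ φ v := by
    intro i v
    conv_lhs => rw [hφ]
    have h6 : ∀ j : Fin qh, ∑ k, A k *ᵥ (G i v) j k = A i *ᵥ φ v := by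
      intro j
      rw [Finset.sum_eq_single i (fun b _ hb => by
        rw [hG]; simp [hb]) (by simp)]
      rw [hG]; simp
    calc ∑ j, E j *ᵥ (∑ k, A k *ᵥ (G i v) j k)
        = ∑ j, E j *ᵥ (A i *ᵥ φ v) := Finset.sum_congr rfl (fun j _ => by rw [h6 j])
      _ = (∑ j, E j) *ᵥ (A i *ᵥ φ v) := (hsumMul _ _).symm
      _ = A i *ᵥ φ v := by rw [hE_sum, Matrix.one_mulVec]
  -- build φbar
  have hle : K' ≤ LinearMap.ker φ := le_of_eq hker
  set φ' : ((Fin qh → Fin q → Fin N → ℂ) ⧸ K') →ₗ[ℂ] (Fin N → ℂ) := K'.liftQ φ hle with hφ'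
  have hφ'mk : ∀ v, φ' (K'.mkQ v) = φ v := fun v => rfl
  have hinj : Function.Injective φ' := by
    rw [← LinearMap.ker_eq_bot]
    exact Submodule.ker_liftQ_eq_bot _ _ _ (le_of_eq hker.symm)
  have hsurj' : Function.Surjective φ' := by
    intro x
    obtain ⟨v, hv⟩ := hsurj x
    exact ⟨K'.mkQ v, hv⟩
  refine ⟨LinearEquiv.ofBijective φ' ⟨hinj, hsurj'⟩, fun v => rfl, ?_, ?_⟩
  · intro w
    obtain ⟨v, rfl⟩ := K'.mkQ_surjective w
    show φ' (G0bar (K'.mkQ v)) = S *ᵥ φ' (K'.mkQ v)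
    rw [hG0bar, hφ'mk, hφ'mk, hφG0]
  · intro i w
    obtain ⟨v, rfl⟩ := K'.mkQ_surjective w
    show φ' (Gbar i (K'.mkQ v)) = A i *ᵥ φ' (K'.mkQ v)
    rw [hGbar, hφ'mk, hφ'mk, hφG]
end

section
/- (Lemma 4.5) Assume that for every j = 1, …, q̂ one has (⋂_{i=1}^q ker A_i) ∩ ker(S − α_j I) = {0}. Then K' = {v ∈ ((ℂ^N)^q)^{q̂} : B_j v^j ∈ K for all j = 1, …, q̂}. -/
open Matrix

/-- Lemma 4.5.  Under the kernel condition (⋆) for each `α_j`,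
`K'` equals `{v : B_j v^j ∈ K for all j}`. -/
theorem Kprime_alternative_description
    (N q qh : ℕ) (hN : 1 ≤ N) (hq : 1 ≤ q) (hqh : 1 ≤ qh)
    (A : Fin q → Matrix (Fin N) (Fin N) ℂ) (α : Fin qh → ℂ)
    (E : Fin qh → Matrix (Fin N) (Fin N) ℂ)
    (hE_orth : ∀ j k, j ≠ k → E j * E k = 0)
    (hE_idem : ∀ j, E j * E j = E j)
    (hE_sum : ∑ j, E j = 1)
    (S : Matrix (Fin N) (Fin N) ℂ)
    (hS : S = ∑ j, α j • E j)
    (hker : ∀ j, (⨅ i, LinearMap.ker (A i).mulVecLin) ⊓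
        LinearMap.ker (S - α j • (1 : Matrix (Fin N) (Fin N) ℂ)).mulVecLin = ⊥)
    (B : Fin qh → ((Fin q → Fin N → ℂ) →ₗ[ℂ] (Fin q → Fin N → ℂ)))
    (hB : ∀ j v i, B j v i = -((E j) *ᵥ (∑ k, (A k) *ᵥ v k)))
    (K : Submodule ℂ (Fin q → Fin N → ℂ))
    (hK : ∀ v, v ∈ K ↔ ∀ i, (A i) *ᵥ v i = 0)
    (K' : Submodule ℂ (Fin qh → Fin q → Fin N → ℂ))
    (hK' : ∀ v, v ∈ K' ↔ ∀ j, (E j) *ᵥ (∑ k, (A k) *ᵥ v j k) = 0) :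
    ∀ v : Fin qh → Fin q → Fin N → ℂ, v ∈ K' ↔ ∀ j, B j (v j) ∈ K := by
  intro v
  rw [hK']
  constructor
  · intro h j
    rw [hK]
    intro i
    rw [hB]
    simp [h j]
  · intro h j
    set u := (E j) *ᵥ (∑ k, (A k) *ᵥ v j k) with hu
    have hu1 : ∀ i, (A i) *ᵥ u = 0 := by
      intro i
      have := (hK _).mp (h j) i
      rw [hB] at this
      rw [mulVec_neg, neg_eq_zero] at this
      exact this
    have hSE : (S - α j • 1) * E j = 0 := by
      rw [hS, sub_mul, Finset.sum_mul, Finset.sum_eq_single j]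
      · simp [smul_mul_assoc, hE_idem j, Matrix.smul_mul]
      · intro k _ hk
        simp [Matrix.smul_mul, hE_orth k j hk]
      · simp
    have hu2 : (S - α j • 1) *ᵥ u = 0 := by
      rw [hu, mulVec_mulVec, hSE, zero_mulVec]
    have hmem : u ∈ (⨅ i, LinearMap.ker (A i).mulVecLin) ⊓
        LinearMap.ker (S - α j • (1 : Matrix (Fin N) (Fin N) ℂ)).mulVecLin := by
      refine Submodule.mem_inf.mpr ⟨?_, ?_⟩
      · rw [Submodule.mem_iInf]
        intro i
        show (A i).mulVecLin u = 0
        rw [mulVecLin_apply]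
        exact hu1 i
      · show (S - α j • 1).mulVecLin u = 0
        rw [mulVecLin_apply]
        exact hu2
    rw [hker j] at hmem
    simpa using hmem
end

section
/- (Proposition 4.6) Assume that for every j = 1, …, q̂ one has (⋂_{i=1}^q ker A_i) ∩ ker(S − α_j I) = {0}. Let B̄_j be the endomorphism of (ℂ^N)^q/K induced by B_j (well defined since B_j K ⊆ K), let L = {w ∈ ((ℂ^N)^q/K)^{q̂} : B̄_j w^j = 0 for all j}, and let F : ((ℂ^N)^q)^{q̂} → ((ℂ^N)^q/K)^{q̂}/L be the composite of the componentwise quotient maps with the quotient by L. Then F is surjective and ker F = K'; equivalently, the induced linear map f' : ((ℂ^N)^q)^{q̂}/K' → ((ℂ^N)^q/K)^{q̂}/L is bijective. -/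
open Matrix

/-- Proposition 4.6.  Under the kernel condition (⋆) for each `α_j`,
the composite `F` of the componentwise quotient maps by `K` with the quotient by `L`
is surjective with kernel `K'`; equivalently, the induced map
`f' : ((ℂ^N)^q)^{q̂}/K' → ((ℂ^N)^q/K)^{q̂}/L` is bijective. -/
theorem f_prime_bijective
    (N q qh : ℕ) (hN : 1 ≤ N) (hq : 1 ≤ q) (hqh : 1 ≤ qh)
    (A : Fin q → Matrix (Fin N) (Fin N) ℂ) (α : Fin qh → ℂ)
    (E : Fin qh → Matrix (Fin N) (Fin N) ℂ)
    (hE_orth : ∀ j k, j ≠ k → E j * E k = 0)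
    (hE_idem : ∀ j, E j * E j = E j)
    (hE_sum : ∑ j, E j = 1)
    (S : Matrix (Fin N) (Fin N) ℂ)
    (hS : S = ∑ j, α j • E j)
    (hker : ∀ j, (⨅ i, LinearMap.ker (A i).mulVecLin) ⊓
        LinearMap.ker (S - α j • (1 : Matrix (Fin N) (Fin N) ℂ)).mulVecLin = ⊥)
    (B : Fin qh → ((Fin q → Fin N → ℂ) →ₗ[ℂ] (Fin q → Fin N → ℂ)))
    (hB : ∀ j v i, B j v i = -((E j) *ᵥ (∑ k, (A k) *ᵥ v k)))
    (K : Submodule ℂ (Fin q → Fin N → ℂ))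
    (hK : ∀ v, v ∈ K ↔ ∀ i, (A i) *ᵥ v i = 0)
    (K' : Submodule ℂ (Fin qh → Fin q → Fin N → ℂ))
    (hK' : ∀ v, v ∈ K' ↔ ∀ j, (E j) *ᵥ (∑ k, (A k) *ᵥ v j k) = 0)
    (Bbar : Fin qh → (((Fin q → Fin N → ℂ) ⧸ K) →ₗ[ℂ] ((Fin q → Fin N → ℂ) ⧸ K)))
    (hBbar : ∀ j v, Bbar j (K.mkQ v) = K.mkQ (B j v))
    (L : Submodule ℂ (Fin qh → ((Fin q → Fin N → ℂ) ⧸ K)))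
    (hL : ∀ w, w ∈ L ↔ ∀ j, Bbar j (w j) = 0)
    (F : (Fin qh → Fin q → Fin N → ℂ) →ₗ[ℂ] ((Fin qh → ((Fin q → Fin N → ℂ) ⧸ K)) ⧸ L))
    (hF : ∀ v, F v = L.mkQ (fun j => K.mkQ (v j))) :
    Function.Surjective F ∧ LinearMap.ker F = K' ∧
    ∃ f' : ((Fin qh → Fin q → Fin N → ℂ) ⧸ K') →ₗ[ℂ]
        ((Fin qh → ((Fin q → Fin N → ℂ) ⧸ K)) ⧸ L),
      (∀ v, f' (K'.mkQ v) = F v) ∧ Function.Bijective f' := by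

  -- S acts as α j on range of E j
  have hSE : ∀ j (x : Fin N → ℂ), S *ᵥ (E j *ᵥ x) = α j • (E j *ᵥ x) := by
    intro j x
    rw [mulVec_mulVec, hS]
    have h1 : (∑ k, α k • E k) * E j = α j • E j := by
      rw [Finset.sum_mul, Finset.sum_eq_single j]
      · rw [smul_mul_assoc, hE_idem]
      · intro k _ hk
        rw [smul_mul_assoc, hE_orth k j hk, smul_zero]
      · simp
    rw [h1, smul_mulVec]
  -- key: vanishing of all A i on u = E j *ᵥ x forces u = 0
  have hkey : ∀ j (u : Fin N → ℂ), S *ᵥ u = α j • u → (∀ i, A i *ᵥ u = 0) → u = 0 := by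
    intro j u hSu hAu
    have hmem : u ∈ (⨅ i, LinearMap.ker (A i).mulVecLin) ⊓
        LinearMap.ker (S - α j • (1 : Matrix (Fin N) (Fin N) ℂ)).mulVecLin := by
      refine Submodule.mem_inf.mpr ⟨?_, ?_⟩
      · rw [Submodule.mem_iInf]
        intro i
        rw [LinearMap.mem_ker, mulVecLin_apply]
        exact hAu i
      · rw [LinearMap.mem_ker, mulVecLin_apply, sub_mulVec, smul_mulVec,
          one_mulVec, hSu, sub_self]
    rw [hker j] at hmem
    exact hmem
  have hsurj : Function.Surjective F := by
    intro y
    obtain ⟨w, rfl⟩ := L.mkQ_surjective y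
    choose u hu using fun j => K.mkQ_surjective (w j)
    refine ⟨u, ?_⟩
    rw [hF]
    congr 1
    funext j
    exact hu j
  have hkerF : LinearMap.ker F = K' := by
    ext v
    rw [LinearMap.mem_ker, hF, hK']
    rw [show L.mkQ (fun j => K.mkQ (v j)) = Submodule.Quotient.mk (fun j => K.mkQ (v j)) from rfl,
      Submodule.Quotient.mk_eq_zero, hL]
    constructor
    · intro h j
      have hj := h j
      rw [hBbar, show K.mkQ (B j (v j)) = Submodule.Quotient.mk (B j (v j)) from rfl,
        Submodule.Quotient.mk_eq_zero, hK] at hj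
      refine hkey j _ (hSE j _) (fun i => ?_)
      have := hj i
      rw [hB] at this
      rwa [mulVec_neg, neg_eq_zero] at this
    · intro h j
      rw [hBbar, show K.mkQ (B j (v j)) = Submodule.Quotient.mk (B j (v j)) from rfl,
        Submodule.Quotient.mk_eq_zero, hK]
      intro i
      rw [hB, h j, mulVec_neg]
      simp
  refine ⟨hsurj, hkerF, K'.liftQ F hkerF.ge, fun v => Submodule.liftQ_apply K' F v, ?_, ?_⟩
  · rw [← LinearMap.ker_eq_bot, Submodule.ker_liftQ_eq_bot]
    exact hkerF.le
  · intro y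
    obtain ⟨v, hv⟩ := hsurj y
    exact ⟨K'.mkQ v, hv⟩
end

section
/- (Inversion formula, concrete form of Theorem 2.9(i)) Assume that for every j = 1, …, q̂ one has both (⋂_{i=1}^q ker A_i) ∩ ker(S − α_j I) = {0} and Σ_{i=1}^q im A_i + im(S − α_j I) = ℂ^N. Then, with F : ((ℂ^N)^q)^{q̂} → ((ℂ^N)^q/K)^{q̂}/L as above, there exists a linear isomorphism ψ : ((ℂ^N)^q/K)^{q̂}/L → ℂ^N such that ψ ∘ F = φ. -/
open Matrix

private lemma mulVec_neg' {N : ℕ} (M : Matrix (Fin N) (Fin N) ℂ) (x : Fin N → ℂ) :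
    M *ᵥ (-x) = -(M *ᵥ x) := by
  simpa using M.mulVecLin.map_neg x

private lemma mulVec_sum'_s11 {N m : ℕ} (M : Matrix (Fin N) (Fin N) ℂ) (x : Fin m → Fin N → ℂ) :
    M *ᵥ (∑ j, x j) = ∑ j, M *ᵥ x j := by
  have h := map_sum M.mulVecLin x Finset.univ
  simp only [Matrix.mulVecLin_apply] at h
  exact h

private lemma sum_mulVec'_s11 {N m : ℕ} (M : Fin m → Matrix (Fin N) (Fin N) ℂ) (x : Fin N → ℂ) :
    (∑ j, M j) *ᵥ x = ∑ j, M j *ᵥ x := by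
  funext i
  simp only [Matrix.mulVec, dotProduct, Matrix.sum_apply, Finset.sum_mul,
    Finset.sum_apply]
  rw [Finset.sum_comm]

/-- Inversion formula, concrete form of Theorem 2.9(i).
Under conditions (⋆) and (⋆⋆) for each `α_j`, there is a linear isomorphism
`ψ : ((ℂ^N)^q/K)^{q̂}/L → ℂ^N` with `ψ ∘ F = φ`. -/
theorem inversion_formula
    (N q qh : ℕ) (hN : 1 ≤ N) (hq : 1 ≤ q) (hqh : 1 ≤ qh)
    (A : Fin q → Matrix (Fin N) (Fin N) ℂ) (α : Fin qh → ℂ)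
    (E : Fin qh → Matrix (Fin N) (Fin N) ℂ)
    (hE_orth : ∀ j k, j ≠ k → E j * E k = 0)
    (hE_idem : ∀ j, E j * E j = E j)
    (hE_sum : ∑ j, E j = 1)
    (S : Matrix (Fin N) (Fin N) ℂ)
    (hS : S = ∑ j, α j • E j)
    (hker : ∀ j, (⨅ i, LinearMap.ker (A i).mulVecLin) ⊓
        LinearMap.ker (S - α j • (1 : Matrix (Fin N) (Fin N) ℂ)).mulVecLin = ⊥)
    (hrange : ∀ j, (⨆ i, LinearMap.range (A i).mulVecLin) ⊔
        LinearMap.range (S - α j • (1 : Matrix (Fin N) (Fin N) ℂ)).mulVecLin = ⊤)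
    (B : Fin qh → ((Fin q → Fin N → ℂ) →ₗ[ℂ] (Fin q → Fin N → ℂ)))
    (hB : ∀ j v i, B j v i = -((E j) *ᵥ (∑ k, (A k) *ᵥ v k)))
    (K : Submodule ℂ (Fin q → Fin N → ℂ))
    (hK : ∀ v, v ∈ K ↔ ∀ i, (A i) *ᵥ v i = 0)
    (Bbar : Fin qh → (((Fin q → Fin N → ℂ) ⧸ K) →ₗ[ℂ] ((Fin q → Fin N → ℂ) ⧸ K)))
    (hBbar : ∀ j v, Bbar j (K.mkQ v) = K.mkQ (B j v))
    (L : Submodule ℂ (Fin qh → ((Fin q → Fin N → ℂ) ⧸ K)))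
    (hL : ∀ w, w ∈ L ↔ ∀ j, Bbar j (w j) = 0)
    (F : (Fin qh → Fin q → Fin N → ℂ) →ₗ[ℂ] ((Fin qh → ((Fin q → Fin N → ℂ) ⧸ K)) ⧸ L))
    (hF : ∀ v, F v = L.mkQ (fun j => K.mkQ (v j)))
    (φ : (Fin qh → Fin q → Fin N → ℂ) →ₗ[ℂ] (Fin N → ℂ))
    (hφ : ∀ v, φ v = ∑ j, (E j) *ᵥ (∑ k, (A k) *ᵥ v j k)) :
    ∃ ψ : ((Fin qh → ((Fin q → Fin N → ℂ) ⧸ K)) ⧸ L) ≃ₗ[ℂ] (Fin N → ℂ),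
      ∀ v, ψ (F v) = φ v := by
  classical
  -- Basic matrix facts
  have hES : ∀ j, E j * (S - α j • (1 : Matrix (Fin N) (Fin N) ℂ)) = 0 := by
    intro j
    rw [hS, Matrix.mul_sub, Finset.mul_sum]
    have h1 : ∀ k, E j * (α k • E k) = if k = j then α j • E j else 0 := by
      intro k
      by_cases h : k = j
      · subst h; simp [Matrix.mul_smul, hE_idem]
      · simp [Matrix.mul_smul, hE_orth j k (Ne.symm h), h]
    rw [Finset.sum_congr rfl fun k _ => h1 k]
    simp [Matrix.mul_smul]
  have hSE : ∀ j, (S - α j • (1 : Matrix (Fin N) (Fin N) ℂ)) * E j = 0 := by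
    intro j
    rw [hS, Matrix.sub_mul, Finset.sum_mul]
    have h1 : ∀ k, (α k • E k) * E j = if k = j then α j • E j else 0 := by
      intro k
      by_cases h : k = j
      · subst h; simp [Matrix.smul_mul, hE_idem]
      · simp [Matrix.smul_mul, hE_orth k j h, h]
    rw [Finset.sum_congr rfl fun k _ => h1 k]
    simp [Matrix.smul_mul]
  -- ker F = ker φ
  have hkerF : ∀ v, F v = 0 ↔ ∀ j i, (A i) *ᵥ (E j *ᵥ (∑ k, (A k) *ᵥ v j k)) = 0 := by
    intro v
    rw [hF]
    constructor
    · intro h j i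
      have hmem : (fun j => K.mkQ (v j)) ∈ L := by
        rwa [← Submodule.Quotient.mk_eq_zero, ← Submodule.mkQ_apply]
      have hb := (hL _).mp hmem j
      rw [hBbar] at hb
      have hBK : B j (v j) ∈ K := by
        rwa [← Submodule.Quotient.mk_eq_zero, ← Submodule.mkQ_apply]
      have h2 := (hK _).mp hBK i
      rw [hB, mulVec_neg', neg_eq_zero] at h2
      exact h2
    · intro h
      have hmem : (fun j => K.mkQ (v j)) ∈ L := by
        rw [hL]
        intro j
        rw [hBbar, Submodule.mkQ_apply, Submodule.Quotient.mk_eq_zero, hK]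
        intro i
        rw [hB, mulVec_neg', neg_eq_zero]
        exact h j i
      rw [Submodule.mkQ_apply, Submodule.Quotient.mk_eq_zero]
      exact hmem
  have hkerφ : ∀ v, φ v = 0 ↔ ∀ j i, (A i) *ᵥ (E j *ᵥ (∑ k, (A k) *ᵥ v j k)) = 0 := by
    intro v
    rw [hφ]
    constructor
    · intro h j i
      have hl : ∀ l, E j *ᵥ (E l *ᵥ (∑ k, (A k) *ᵥ v l k))
          = if l = j then E j *ᵥ (∑ k, (A k) *ᵥ v j k) else 0 := by
        intro l
        by_cases hl : l = j
        · subst hl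
          rw [Matrix.mulVec_mulVec, hE_idem]
          simp
        · rw [Matrix.mulVec_mulVec, hE_orth j l (Ne.symm hl)]
          simp [hl]
      have hEj : E j *ᵥ (∑ l, E l *ᵥ (∑ k, (A k) *ᵥ v l k)) = E j *ᵥ (∑ k, (A k) *ᵥ v j k) := by
        rw [mulVec_sum'_s11 (E j) (fun l => E l *ᵥ (∑ k, (A k) *ᵥ v l k)),
          Finset.sum_congr rfl fun l _ => hl l]
        simp
      rw [← hEj, h]
      simp
    · intro h
      have hz : ∀ j, E j *ᵥ (∑ k, (A k) *ᵥ v j k) = 0 := by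
        intro j
        set x := E j *ᵥ (∑ k, (A k) *ᵥ v j k) with hx
        have hx1 : x ∈ (⨅ i, LinearMap.ker (A i).mulVecLin) := by
          rw [Submodule.mem_iInf]
          intro i
          rw [LinearMap.mem_ker, Matrix.mulVecLin_apply]
          exact h j i
        have hx2 : x ∈ LinearMap.ker (S - α j • (1 : Matrix (Fin N) (Fin N) ℂ)).mulVecLin := by
          rw [LinearMap.mem_ker, Matrix.mulVecLin_apply, hx, Matrix.mulVec_mulVec, hSE]
          simp
        have : x ∈ (⊥ : Submodule ℂ (Fin N → ℂ)) := by
          rw [← hker j]; exact ⟨hx1, hx2⟩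
        simpa using this
      rw [Finset.sum_congr rfl fun j _ => hz j]
      simp
  have hker_eq : LinearMap.ker F = LinearMap.ker φ := by
    ext v
    rw [LinearMap.mem_ker, LinearMap.mem_ker, hkerF, hkerφ]
  -- surjectivity of F
  have hFsurj : Function.Surjective F := by
    intro y
    obtain ⟨w, rfl⟩ := L.mkQ_surjective y
    have hv : ∀ j, ∃ u, K.mkQ u = w j := fun j => K.mkQ_surjective (w j)
    refine ⟨fun j => (hv j).choose, ?_⟩
    rw [hF]
    congr 1
    funext j
    exact (hv j).choose_spec
  -- surjectivity of φ
  have hφsurj : Function.Surjective φ := by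
    intro x
    have hexj : ∀ j, ∃ c : Fin q → Fin N → ℂ,
        E j *ᵥ (∑ k, (A k) *ᵥ c k) = E j *ᵥ x := by
      intro j
      have hx : x ∈ (⨆ i, LinearMap.range (A i).mulVecLin) ⊔
          LinearMap.range (S - α j • (1 : Matrix (Fin N) (Fin N) ℂ)).mulVecLin := by
        rw [hrange j]; trivial
      obtain ⟨u, hu, z, hz, hsum⟩ := Submodule.mem_sup.mp hx
      obtain ⟨y, rfl⟩ := hz
      have hu' : ∃ c : Fin q → Fin N → ℂ, (∑ k, (A k) *ᵥ c k) = u := by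
        have hle : (⨆ i, LinearMap.range (A i).mulVecLin) ≤
            LinearMap.range (∑ i, (A i).mulVecLin ∘ₗ LinearMap.proj i :
              (Fin q → Fin N → ℂ) →ₗ[ℂ] (Fin N → ℂ)) := by
          refine iSup_le fun i => ?_
          rintro _ ⟨z, rfl⟩
          refine ⟨Pi.single i z, ?_⟩
          rw [LinearMap.sum_apply]
          rw [Finset.sum_eq_single i]
          · simp
          · intro k _ hk
            simp [Pi.single_eq_of_ne hk]
          · simp
        obtain ⟨c, hc⟩ := hle hu
        refine ⟨c, ?_⟩
        rw [← hc, LinearMap.sum_apply]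
        simp
      obtain ⟨c, hc⟩ := hu'
      refine ⟨c, ?_⟩
      rw [hc, ← hsum, Matrix.mulVec_add, Matrix.mulVecLin_apply, Matrix.mulVec_mulVec, hES]
      simp
    refine ⟨fun j => (hexj j).choose, ?_⟩
    rw [hφ]
    calc (∑ j, E j *ᵥ (∑ k, (A k) *ᵥ (hexj j).choose k))
        = ∑ j, E j *ᵥ x := Finset.sum_congr rfl fun j _ => (hexj j).choose_spec
      _ = (∑ j, E j) *ᵥ x := (sum_mulVec'_s11 E x).symm
      _ = x := by rw [hE_sum]; simp
  -- assemble ψ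
  set e1 := F.quotKerEquivOfSurjective hFsurj
  set e2 := Submodule.quotEquivOfEq _ _ hker_eq
  set e3 := φ.quotKerEquivOfSurjective hφsurj
  refine ⟨(e1.symm.trans e2).trans e3, ?_⟩
  intro v
  have h1 : e1 (Submodule.Quotient.mk v) = F v := by
    simp [e1, LinearMap.quotKerEquivOfSurjective, LinearMap.quotKerEquivRange]
  have h1' : e1.symm (F v) = Submodule.Quotient.mk v := by
    rw [← h1, LinearEquiv.symm_apply_apply]
  have h3 : e3 (Submodule.Quotient.mk v) = φ v := by
    simp [e3, LinearMap.quotKerEquivOfSurjective, LinearMap.quotKerEquivRange]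
  simp only [LinearEquiv.trans_apply, h1']
  rw [show e2 (Submodule.Quotient.mk v) = Submodule.Quotient.mk v from
    Submodule.quotEquivOfEq_mk _ _ hker_eq v]
  exact h3
end

section
/- (Theorem 2.9(ii): irreducibility of the middle Laplace transform) Assume a_1, …, a_q are pairwise distinct, α_1, …, α_{q̂} are pairwise distinct, and the tuple (S, A_1, …, A_q) is irreducible. Then the middle-Laplace-transformed tuple is irreducible: the only subspaces of the quotient (ℂ^N)^q/K that are invariant under T̄ and under every B̄_j (j = 1, …, q̂) are {0} and the whole quotient space, where T̄ and B̄_j are the endomorphisms induced by T and B_j. -/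
open Matrix

section MLaux

variable {m n : ℕ}

private lemma mlt_single_apply (i l : Fin m) (x : Fin n → ℂ) :
    (Pi.single i x : Fin m → Fin n → ℂ) l = if l = i then x else 0 :=
  Pi.single_apply i x l

private lemma mlt_single_neg (i : Fin m) (x : Fin n → ℂ) :
    (Pi.single i (-x) : Fin m → Fin n → ℂ) = -Pi.single i x := by
  funext l
  simp only [mlt_single_apply, Pi.neg_apply]
  split <;> simp [mlt_single_apply, *]

private lemma mlt_single_add (i : Fin m) (x y : Fin n → ℂ) :
    (Pi.single i (x + y) : Fin m → Fin n → ℂ) = Pi.single i x + Pi.single i y := by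
  funext l
  simp only [mlt_single_apply, Pi.add_apply]
  split <;> simp [mlt_single_apply, *]

private lemma mlt_single_smul (i : Fin m) (c : ℂ) (x : Fin n → ℂ) :
    (Pi.single i (c • x) : Fin m → Fin n → ℂ) = c • (Pi.single i x : Fin m → Fin n → ℂ) := by
  funext l
  simp only [mlt_single_apply, Pi.smul_apply]
  split <;> simp [mlt_single_apply, *]

private lemma mlt_single_zero (i : Fin m) :
    (Pi.single i (0 : Fin n → ℂ) : Fin m → Fin n → ℂ) = 0 := by
  funext l
  simp [mlt_single_apply]

private lemma mlt_sum_mulVec (s : Finset (Fin m)) (M : Fin m → Matrix (Fin n) (Fin n) ℂ)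
    (v : Fin n → ℂ) : (∑ j ∈ s, M j) *ᵥ v = ∑ j ∈ s, M j *ᵥ v := by
  induction s using Finset.cons_induction with
  | empty => simp
  | cons a s ha ih => rw [Finset.sum_cons, Finset.sum_cons, Matrix.add_mulVec, ih]

end MLaux

/-- Theorem 2.9(ii).  If `(S, A_1, …, A_q)` is irreducible (and the
`a_i`, resp. the `α_j`, are pairwise distinct), then the middle-Laplace-transformed
tuple `(T̄, B̄_1, …, B̄_{q̂})` on `(ℂ^N)^q / K` is irreducible. -/
theorem middle_laplace_irreducible
    (N q qh : ℕ) (hN : 1 ≤ N) (hq : 1 ≤ q) (hqh : 1 ≤ qh)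
    (A : Fin q → Matrix (Fin N) (Fin N) ℂ)
    (a : Fin q → ℂ) (α : Fin qh → ℂ)
    (ha : Function.Injective a) (hα : Function.Injective α)
    (E : Fin qh → Matrix (Fin N) (Fin N) ℂ)
    (hE_orth : ∀ j k, j ≠ k → E j * E k = 0)
    (hE_idem : ∀ j, E j * E j = E j)
    (hE_sum : ∑ j, E j = 1)
    (S : Matrix (Fin N) (Fin N) ℂ)
    (hS : S = ∑ j, α j • E j)
    (hirr : ∀ U : Submodule ℂ (Fin N → ℂ),
        (∀ x ∈ U, S *ᵥ x ∈ U) → (∀ i, ∀ x ∈ U, (A i) *ᵥ x ∈ U) → U = ⊥ ∨ U = ⊤)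
    (T : (Fin q → Fin N → ℂ) →ₗ[ℂ] (Fin q → Fin N → ℂ))
    (hT : ∀ v i, T v i = a i • v i)
    (B : Fin qh → ((Fin q → Fin N → ℂ) →ₗ[ℂ] (Fin q → Fin N → ℂ)))
    (hB : ∀ j v i, B j v i = -((E j) *ᵥ (∑ k, (A k) *ᵥ v k)))
    (K : Submodule ℂ (Fin q → Fin N → ℂ))
    (hK : ∀ v, v ∈ K ↔ ∀ i, (A i) *ᵥ v i = 0)
    (Tbar : ((Fin q → Fin N → ℂ) ⧸ K) →ₗ[ℂ] ((Fin q → Fin N → ℂ) ⧸ K))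
    (hTbar : ∀ v, Tbar (K.mkQ v) = K.mkQ (T v))
    (Bbar : Fin qh → (((Fin q → Fin N → ℂ) ⧸ K) →ₗ[ℂ] ((Fin q → Fin N → ℂ) ⧸ K)))
    (hBbar : ∀ j v, Bbar j (K.mkQ v) = K.mkQ (B j v)) :
    ∀ U : Submodule ℂ ((Fin q → Fin N → ℂ) ⧸ K),
      (∀ x ∈ U, Tbar x ∈ U) → (∀ j, ∀ x ∈ U, Bbar j x ∈ U) → U = ⊥ ∨ U = ⊤ := by
  intro W hTW hBW
  set U : Submodule ℂ (Fin q → Fin N → ℂ) := W.comap K.mkQ with hUdef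
  have hmemU : ∀ v, v ∈ U ↔ K.mkQ v ∈ W := fun v => Iff.rfl
  -- U is invariant under T and every B j
  have hTU : ∀ v ∈ U, T v ∈ U := by
    intro v hv
    have h2 := hTW _ ((hmemU v).mp hv)
    rw [hTbar] at h2
    exact (hmemU _).mpr h2
  have hBU : ∀ j, ∀ v ∈ U, B j v ∈ U := by
    intro j v hv
    have h2 := hBW j _ ((hmemU v).mp hv)
    rw [hBbar] at h2
    exact (hmemU _).mpr h2
  -- powers of T act coordinatewise by powers of a
  have hTpow : ∀ (k : ℕ) (v : Fin q → Fin N → ℂ) (l : Fin q),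
      (T ^ k) v l = a l ^ k • v l := by
    intro k
    induction k with
    | zero => intro v l; simp
    | succ k ih =>
      intro v l
      have h1 : (T ^ (k + 1)) v = (T ^ k) (T v) := by
        rw [pow_succ]; rfl
      rw [h1, ih (T v) l, hT v l, smul_smul, ← pow_succ]
  have hTpowU : ∀ (k : ℕ), ∀ v ∈ U, (T ^ k) v ∈ U := by
    intro k
    induction k with
    | zero => intro v hv; simpa using hv
    | succ k ih =>
      intro v hv
      have h1 : (T ^ (k + 1)) v = (T ^ k) (T v) := by rw [pow_succ]; rfl
      rw [h1]
      exact ih _ (hTU v hv)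
  -- the key projection property: U is graded by the eigenspaces of T
  have hproj : ∀ v ∈ U, ∀ i : Fin q, (Pi.single i (v i) : Fin q → Fin N → ℂ) ∈ U := by
    intro v hv i
    set M : Matrix (Fin q) (Fin q) ℂ := (Matrix.vandermonde a)ᵀ with hM
    have hdet : IsUnit M.det := by
      rw [hM, Matrix.det_transpose, Matrix.det_vandermonde, isUnit_iff_ne_zero,
        Finset.prod_ne_zero_iff]
      intro i _
      rw [Finset.prod_ne_zero_iff]
      intro j hj
      rw [Finset.mem_Ioi] at hj
      exact sub_ne_zero.mpr fun h => (ne_of_gt hj) (ha h)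
    have hCM : M⁻¹ * M = 1 := Matrix.nonsing_inv_mul M hdet
    have key : (∑ k, (M⁻¹ i k) • ((T ^ (k : ℕ)) v)) =
        (Pi.single i (v i) : Fin q → Fin N → ℂ) := by
      funext l
      have h1 : (∑ k, (M⁻¹ i k) • ((T ^ (k : ℕ)) v)) l
          = ∑ k, (M⁻¹ i k) • ((T ^ (k : ℕ)) v l) := by
        simp [Finset.sum_apply]
      rw [h1]
      have h2 : ∀ k : Fin q, (M⁻¹ i k) • ((T ^ (k : ℕ)) v l)
          = (M⁻¹ i k * a l ^ (k : ℕ)) • v l := by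
        intro k
        rw [hTpow, smul_smul]
      rw [Finset.sum_congr rfl (fun k _ => h2 k), ← Finset.sum_smul]
      have h3 : ∑ k : Fin q, M⁻¹ i k * a l ^ (k : ℕ) = (M⁻¹ * M) i l := by
        rw [Matrix.mul_apply]
        refine Finset.sum_congr rfl fun k _ => ?_
        rw [hM]
        simp [Matrix.transpose_apply, Matrix.vandermonde]
      rw [h3, hCM, Matrix.one_apply, mlt_single_apply]
      by_cases h : i = l
      · subst h; simp
      · rw [if_neg h, if_neg fun h' => h h'.symm, zero_smul]
    rw [← key]
    exact Submodule.sum_mem _ fun k _ => Submodule.smul_mem _ _ (hTpowU _ v hv)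
  -- value of B j on single-slot vectors
  have hBval : ∀ (j : Fin qh) (i : Fin q) (x : Fin N → ℂ) (l : Fin q),
      B j (Pi.single i x) l = -((E j * A i) *ᵥ x) := by
    intro j i x l
    rw [hB]
    have h1 : (∑ k, (A k) *ᵥ (Pi.single i x : Fin q → Fin N → ℂ) k) = (A i) *ᵥ x := by
      rw [Finset.sum_eq_single i]
      · rw [Pi.single_eq_same]
      · intro b _ hb
        rw [Pi.single_eq_of_ne hb, Matrix.mulVec_zero]
      · intro h; exact absurd (Finset.mem_univ i) h
    rw [h1, Matrix.mulVec_mulVec]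
  -- the subspace X of ℂ^N
  set G : Set (Fin N → ℂ) :=
    {y | ∃ (i : Fin q) (j : Fin qh) (x : Fin N → ℂ),
      (Pi.single i x : Fin q → Fin N → ℂ) ∈ U ∧ y = (E j * A i) *ᵥ x} with hG
  set X : Submodule ℂ (Fin N → ℂ) := Submodule.span ℂ G with hX
  -- every element of X sits diagonally in U
  have hXU : ∀ y ∈ X, ∀ k : Fin q, (Pi.single k y : Fin q → Fin N → ℂ) ∈ U := by
    intro y hy
    refine Submodule.span_induction ?_ ?_ ?_ ?_ hy
    · rintro y ⟨i, j, x, hx, rfl⟩ k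
      have hb : B j (Pi.single i x) ∈ U := hBU j _ hx
      have hval : B j (Pi.single i x) k = -((E j * A i) *ᵥ x) := hBval j i x k
      have h2 := hproj _ hb k
      rw [hval, mlt_single_neg] at h2
      simpa using Submodule.neg_mem U h2
    · intro k; rw [mlt_single_zero]; exact Submodule.zero_mem U
    · intro x y _ _ hx hy k
      rw [mlt_single_add]
      exact Submodule.add_mem U (hx k) (hy k)
    · intro c x _ hx k
      rw [mlt_single_smul]
      exact Submodule.smul_mem U c (hx k)
  -- if the k-slot of y is in U then A k y ∈ X
  have hAmem : ∀ (k : Fin q) (y : Fin N → ℂ),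
      (Pi.single k y : Fin q → Fin N → ℂ) ∈ U → (A k) *ᵥ y ∈ X := by
    intro k y hy
    have h1 : (A k) *ᵥ y = ∑ j, (E j * A k) *ᵥ y := by
      rw [← mlt_sum_mulVec]
      rw [← Finset.sum_mul, hE_sum, one_mul]
    rw [h1]
    exact Submodule.sum_mem _ fun j _ =>
      Submodule.subset_span ⟨k, j, y, hy, rfl⟩
  -- X is S-invariant
  have hSX : ∀ x ∈ X, S *ᵥ x ∈ X := by
    intro x hx
    refine Submodule.span_induction ?_ ?_ ?_ ?_ hx
    · rintro y ⟨i, j, x, hx, rfl⟩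
      have hSE : S * E j = α j • E j := by
        rw [hS, Finset.sum_mul, Finset.sum_eq_single j]
        · rw [smul_mul_assoc, hE_idem]
        · intro b _ hb
          rw [smul_mul_assoc, hE_orth b j hb, smul_zero]
        · intro h; exact absurd (Finset.mem_univ j) h
      have : S *ᵥ ((E j * A i) *ᵥ x) = α j • ((E j * A i) *ᵥ x) := by
        rw [Matrix.mulVec_mulVec, ← mul_assoc, hSE, smul_mul_assoc,
          Matrix.smul_mulVec]
      rw [this]
      exact Submodule.smul_mem X _ (Submodule.subset_span ⟨i, j, x, hx, rfl⟩)
    · rw [Matrix.mulVec_zero]; exact Submodule.zero_mem X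
    · intro u v _ _ hu hv
      rw [Matrix.mulVec_add]
      exact Submodule.add_mem X hu hv
    · intro c u _ hu
      rw [Matrix.mulVec_smul]
      exact Submodule.smul_mem X c hu
  -- X is A i -invariant
  have hAX : ∀ i, ∀ x ∈ X, (A i) *ᵥ x ∈ X := by
    intro i x hx
    exact hAmem i x (hXU x hx i)
  rcases hirr X hSX hAX with h | h
  · -- X = ⊥ : then W = ⊥
    left
    rw [eq_bot_iff]
    intro w hw
    obtain ⟨v, rfl⟩ := K.mkQ_surjective w
    have hv : v ∈ U := (hmemU v).mpr hw
    have hvK : v ∈ K := by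
      rw [hK]
      intro i
      have h2 : (A i) *ᵥ v i ∈ X := hAmem i (v i) (hproj v hv i)
      rw [h, Submodule.mem_bot] at h2
      exact h2
    rw [Submodule.mem_bot]
    exact (Submodule.Quotient.mk_eq_zero K).mpr hvK
  · -- X = ⊤ : then W = ⊤
    right
    rw [eq_top_iff]
    intro w _
    obtain ⟨v, rfl⟩ := K.mkQ_surjective w
    have hv : v ∈ U := by
      have h1 : v = ∑ i, (Pi.single i (v i) : Fin q → Fin N → ℂ) :=
        (Finset.univ_sum_single v).symm
      rw [h1]
      exact Submodule.sum_mem _ fun i _ =>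
        hXU (v i) (h ▸ Submodule.mem_top) i
    exact (hmemU v).mp hv
end

section
/- (Kernel of the induced residue matrix) Fix j with 1 ≤ j ≤ q̂ and assume (⋂_{i=1}^q ker A_i) ∩ ker(S − α_j I) = {0}. Then for v ∈ (ℂ^N)^q one has B_j v ∈ K if and only if v ∈ K + ker B_j; equivalently, ker B̄_j = π(ker B_j), where π : (ℂ^N)^q → (ℂ^N)^q/K is the quotient map and B̄_j is the endomorphism of (ℂ^N)^q/K induced by B_j. -/
open Matrix

/-- Kernel of the induced residue matrix.  Fix `j` and assume the
kernel condition (⋆) for `α_j`.  Then `B_j v ∈ K ↔ v ∈ K + ker B_j`; equivalently,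
`ker B̄_j = π(ker B_j)` for the quotient map `π : (ℂ^N)^q → (ℂ^N)^q/K`. -/
theorem kernel_of_induced_residue
    (N q qh : ℕ) (hN : 1 ≤ N) (hq : 1 ≤ q) (hqh : 1 ≤ qh)
    (A : Fin q → Matrix (Fin N) (Fin N) ℂ) (α : Fin qh → ℂ)
    (E : Fin qh → Matrix (Fin N) (Fin N) ℂ)
    (hE_orth : ∀ j k, j ≠ k → E j * E k = 0)
    (hE_idem : ∀ j, E j * E j = E j)
    (hE_sum : ∑ j, E j = 1)
    (S : Matrix (Fin N) (Fin N) ℂ)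
    (hS : S = ∑ j, α j • E j)
    (j : Fin qh)
    (hker : (⨅ i, LinearMap.ker (A i).mulVecLin) ⊓
        LinearMap.ker (S - α j • (1 : Matrix (Fin N) (Fin N) ℂ)).mulVecLin = ⊥)
    (B : Fin qh → ((Fin q → Fin N → ℂ) →ₗ[ℂ] (Fin q → Fin N → ℂ)))
    (hB : ∀ j v i, B j v i = -((E j) *ᵥ (∑ k, (A k) *ᵥ v k)))
    (K : Submodule ℂ (Fin q → Fin N → ℂ))
    (hK : ∀ v, v ∈ K ↔ ∀ i, (A i) *ᵥ v i = 0)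
    (Bbar : ((Fin q → Fin N → ℂ) ⧸ K) →ₗ[ℂ] ((Fin q → Fin N → ℂ) ⧸ K))
    (hBbar : ∀ v, Bbar (K.mkQ v) = K.mkQ (B j v)) :
    (∀ v, B j v ∈ K ↔ v ∈ K ⊔ LinearMap.ker (B j)) ∧
    LinearMap.ker Bbar = Submodule.map K.mkQ (LinearMap.ker (B j)) := by

  -- `B j` vanishes on `K`
  have hBK0 : ∀ u, u ∈ K → B j u = 0 := by
    intro u hu
    funext i
    rw [hB]
    have hz : (∑ k, A k *ᵥ u k) = 0 :=
      Finset.sum_eq_zero fun k _ => (hK u).1 hu k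
    rw [hz, mulVec_zero, neg_zero]
    rfl
  have hSE : (S - α j • (1 : Matrix (Fin N) (Fin N) ℂ)) * E j = 0 := by
    rw [sub_mul, smul_mul_assoc, one_mul, hS, Finset.sum_mul,
      Finset.sum_eq_single j]
    · rw [smul_mul_assoc, hE_idem, sub_self]
    · intro k _ hk
      rw [smul_mul_assoc, hE_orth k j hk, smul_zero]
    · intro h; exact absurd (Finset.mem_univ j) h
  have key : ∀ v, B j v ∈ K → B j v = 0 := by
    intro v hv
    have hw0 : -((E j) *ᵥ (∑ k, (A k) *ᵥ v k)) = 0 := by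
      have hmem : -((E j) *ᵥ (∑ k, (A k) *ᵥ v k)) ∈
          (⨅ i, LinearMap.ker (A i).mulVecLin) ⊓
          LinearMap.ker (S - α j • (1 : Matrix (Fin N) (Fin N) ℂ)).mulVecLin := by
        refine Submodule.mem_inf.2 ⟨?_, ?_⟩
        · rw [Submodule.mem_iInf]
          intro i
          rw [LinearMap.mem_ker, mulVecLin_apply, ← hB j v i]
          exact (hK _).1 hv i
        · rw [LinearMap.mem_ker, mulVecLin_apply, mulVec_neg, mulVec_mulVec,
            hSE, zero_mulVec, neg_zero]
      rw [hker] at hmem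
      exact hmem
    funext i
    rw [hB j v i, hw0]
    rfl
  have part1 : ∀ v, B j v ∈ K ↔ v ∈ K ⊔ LinearMap.ker (B j) := by
    intro v
    constructor
    · intro hv
      exact Submodule.mem_sup_right (LinearMap.mem_ker.2 (key v hv))
    · intro hv
      obtain ⟨k, hk, u, hu, rfl⟩ := Submodule.mem_sup.1 hv
      rw [map_add, hBK0 k hk, LinearMap.mem_ker.1 hu, add_zero]
      exact K.zero_mem
  refine ⟨part1, ?_⟩
  ext x
  obtain ⟨v, rfl⟩ := Submodule.mkQ_surjective K x
  simp only [LinearMap.mem_ker, Submodule.mem_map]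
  constructor
  · intro h
    rw [hBbar, Submodule.mkQ_apply, Submodule.Quotient.mk_eq_zero] at h
    exact ⟨v, LinearMap.mem_ker.2 (key v h), rfl⟩
  · rintro ⟨u, hu, huv⟩
    have hvu : v - u ∈ K := by
      rw [← Submodule.Quotient.eq]
      exact (huv.symm : (K.mkQ v : _) = K.mkQ u)
    have : B j v = 0 := by
      have : B j v = B j (v - u) + B j u := by rw [← map_add, sub_add_cancel]
      rw [this, hBK0 _ hvu, LinearMap.mem_ker.1 hu, add_zero]
    rw [hBbar, this, map_zero]
end

section
/- (Section 5: the middle convolution via the middle Laplace transform agrees with Dettweiler–Reiter's) Assume β ≠ 0. Then: (a) each C_i maps K into K and K_∞ into K_∞ (hence C_i maps K + K_∞ into itself); (b) for every v ∈ (ℂ^N)^q one has (A + β·id)v ∈ K if and only if v ∈ K + K_∞; consequently the kernel of the endomorphism of (ℂ^N)^q/K induced by A + β·id equals the image of K_∞ under the quotient map (ℂ^N)^q → (ℂ^N)^q/K; and (c) there is a linear isomorphism Θ : ((ℂ^N)^q/K)/ker(\overline{A + β}) → (ℂ^N)^q/(K + K_∞) such that Θ sends the class of v (taken modulo K and then modulo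 ker(\overline{A + β})) to the class of v modulo K + K_∞, and for each i = 1, …, q, Θ intertwines the endomorphism induced by C_i on the source with the endomorphism induced by C_i on the target. -/
open Matrix

/-!
Write `T = A + β`. Since `A` vanishes on `K`, `T` acts on `K` as `β`; the block projectors `εᵢ`
preserve `K`, so `Cᵢ = εᵢ ∘ T` preserves `K` and kills `K_∞ = ker T`. The heart of the matter is
`T⁻¹(K) = K + K_∞` for `β ≠ 0`. It identifies the kernel of the map induced by `T` on `V/K` with
the image of `K + K_∞`, and `Θ` is then the third isomorphism theorem, which intertwines any two
maps induced by the same `Cᵢ`.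
-/

namespace MiddleConvolution

variable {𝕜 ι n : Type*} [Field 𝕜] [Fintype n] (A : ι → Matrix n n 𝕜)

def localKernel : Submodule 𝕜 (ι → n → 𝕜) :=
  ⨅ i, (LinearMap.ker (A i).mulVecLin).comap (LinearMap.proj i)

theorem mem_localKernel {v : ι → n → 𝕜} : v ∈ localKernel A ↔ ∀ i, A i *ᵥ v i = 0 := by
  simp [localKernel]

theorem localKernel_le_comap_single_comp_proj [DecidableEq ι] (i : ι) :
    localKernel A ≤
      (localKernel A).comap (LinearMap.single 𝕜 (fun _ => n → 𝕜) i ∘ₗ LinearMap.proj i) :=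
  fun v hv => (mem_localKernel A).mpr fun m => by
    rcases eq_or_ne m i with rfl | hm
    · simpa using (mem_localKernel A).mp hv m
    · simp [hm]

variable [Fintype ι]

def sumOp : (ι → n → 𝕜) →ₗ[𝕜] ι → n → 𝕜 :=
  LinearMap.pi fun _ => ∑ k, (A k).mulVecLin ∘ₗ LinearMap.proj k

@[simp]
theorem sumOp_apply (v : ι → n → 𝕜) (i : ι) : sumOp A v i = ∑ k, A k *ᵥ v k := by
  simp [sumOp]

variable {A}

theorem sumOp_eq_zero_of_mem_localKernel {v : ι → n → 𝕜} (hv : v ∈ localKernel A) :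
    sumOp A v = 0 :=
  funext fun _ => by
    simpa using Finset.sum_eq_zero fun k _ => (mem_localKernel A).mp hv k

variable (A)

theorem localKernel_le_comap_sumOp_add_smul (β : 𝕜) :
    localKernel A ≤ (localKernel A).comap (sumOp A + β • LinearMap.id) := fun v hv => by
  simpa [sumOp_eq_zero_of_mem_localKernel hv] using (localKernel A).smul_mem β hv

/-- `v = (v + c) - c` with `c` the constant tuple `β⁻¹ ∑ₖ Aₖ vₖ`: the first summand lies in `K`,
the second in `ker (A + β)`. -/
theorem comap_sumOp_add_smul_localKernel {β : 𝕜} (hβ : β ≠ 0) :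
    (localKernel A).comap (sumOp A + β • LinearMap.id) =
      localKernel A ⊔ LinearMap.ker (sumOp A + β • LinearMap.id) := by
  refine le_antisymm (fun v hv => ?_)
    (sup_le (localKernel_le_comap_sumOp_add_smul A β) (LinearMap.ker_le_comap _))
  set s := ∑ k, A k *ᵥ v k
  have hAs : ∀ i, A i *ᵥ s = -(β • A i *ᵥ v i) := fun i => by
    have := (mem_localKernel A).mp hv i
    simp only [LinearMap.add_apply, LinearMap.smul_apply, LinearMap.id_apply, Pi.add_apply,
      Pi.smul_apply, sumOp_apply, mulVec_add, mulVec_smul] at this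
    exact eq_neg_of_add_eq_zero_left this
  have hsum : ∑ k, A k *ᵥ s = -(β • s) := by
    simp only [hAs, Finset.sum_neg_distrib, ← Finset.smul_sum, s]
  have hv_add : v + (fun _ => β⁻¹ • s) ∈ localKernel A := (mem_localKernel A).mpr fun i => by
    simp [mulVec_add, mulVec_smul, hAs, smul_smul, hβ]
  have hconst : (fun _ => β⁻¹ • s) ∈ LinearMap.ker (sumOp A + β • LinearMap.id) := by
    ext i : 1
    simp [mulVec_smul, ← Finset.smul_sum, hsum, smul_smul, hβ]
  simpa using Submodule.sub_mem _ (Submodule.mem_sup_left hv_add) (Submodule.mem_sup_right hconst)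

end MiddleConvolution

theorem Submodule.intertwines_of_mkQ_mkQ {R M : Type*} [Ring R] [AddCommGroup M] [Module R M]
    {p : Submodule R M} {p' : Submodule R (M ⧸ p)} {r : Submodule R M}
    {Θ : (M ⧸ p) ⧸ p' →ₗ[R] M ⧸ r} (hΘ : ∀ v, Θ (p'.mkQ (p.mkQ v)) = r.mkQ v)
    {f : M →ₗ[R] M} {C₁ : (M ⧸ p) ⧸ p' →ₗ[R] (M ⧸ p) ⧸ p'} {C₂ : M ⧸ r →ₗ[R] M ⧸ r}
    (hC₁ : ∀ v, C₁ (p'.mkQ (p.mkQ v)) = p'.mkQ (p.mkQ (f v)))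
    (hC₂ : ∀ v, C₂ (r.mkQ v) = r.mkQ (f v)) (w : (M ⧸ p) ⧸ p') : Θ (C₁ w) = C₂ (Θ w) := by
  obtain ⟨x, rfl⟩ := p'.mkQ_surjective w
  obtain ⟨v, rfl⟩ := p.mkQ_surjective x
  rw [hC₁, hΘ, hΘ, hC₂]

theorem middle_convolution_agrees_with_DR_general
    (N q : ℕ)
    (A : Fin q → Matrix (Fin N) (Fin N) ℂ) (β : ℂ) (hβ : β ≠ 0)
    (Acal : (Fin q → Fin N → ℂ) →ₗ[ℂ] (Fin q → Fin N → ℂ))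
    (hAcal : ∀ v i, Acal v i = ∑ k, (A k) *ᵥ v k)
    (eps : Fin q → ((Fin q → Fin N → ℂ) →ₗ[ℂ] (Fin q → Fin N → ℂ)))
    (heps : ∀ i v m, eps i v m = if m = i then v i else 0)
    (C : Fin q → ((Fin q → Fin N → ℂ) →ₗ[ℂ] (Fin q → Fin N → ℂ)))
    (hC : ∀ i, C i = (eps i) ∘ₗ (Acal + β • LinearMap.id))
    (K : Submodule ℂ (Fin q → Fin N → ℂ))
    (hK : ∀ v, v ∈ K ↔ ∀ i, (A i) *ᵥ v i = 0)
    (Kinf : Submodule ℂ (Fin q → Fin N → ℂ))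
    (hKinf : Kinf = LinearMap.ker (Acal + β • LinearMap.id))
    (Abar : ((Fin q → Fin N → ℂ) ⧸ K) →ₗ[ℂ] ((Fin q → Fin N → ℂ) ⧸ K))
    (hAbar : ∀ v, Abar (K.mkQ v) = K.mkQ (Acal v + β • v)) :
    (∀ i, (∀ v ∈ K, C i v ∈ K) ∧ (∀ v ∈ Kinf, C i v ∈ Kinf) ∧
      (∀ v ∈ K ⊔ Kinf, C i v ∈ K ⊔ Kinf)) ∧
    (∀ v, Acal v + β • v ∈ K ↔ v ∈ K ⊔ Kinf) ∧
    (LinearMap.ker Abar = Submodule.map K.mkQ Kinf) ∧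
    (∃ Θ : (((Fin q → Fin N → ℂ) ⧸ K) ⧸ LinearMap.ker Abar) ≃ₗ[ℂ]
        ((Fin q → Fin N → ℂ) ⧸ (K ⊔ Kinf)),
      (∀ v, Θ ((LinearMap.ker Abar).mkQ (K.mkQ v)) = (K ⊔ Kinf).mkQ v) ∧
      (∀ i,
        ∀ (C1 : (((Fin q → Fin N → ℂ) ⧸ K) ⧸ LinearMap.ker Abar) →ₗ[ℂ]
            (((Fin q → Fin N → ℂ) ⧸ K) ⧸ LinearMap.ker Abar)),
          (∀ v, C1 ((LinearMap.ker Abar).mkQ (K.mkQ v)) =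
            (LinearMap.ker Abar).mkQ (K.mkQ (C i v))) →
        ∀ (C2 : ((Fin q → Fin N → ℂ) ⧸ (K ⊔ Kinf)) →ₗ[ℂ]
            ((Fin q → Fin N → ℂ) ⧸ (K ⊔ Kinf))),
          (∀ v, C2 ((K ⊔ Kinf).mkQ v) = (K ⊔ Kinf).mkQ (C i v)) →
        ∀ w, Θ (C1 w) = C2 (Θ w))) := by
  open MiddleConvolution in
  obtain rfl : Acal = sumOp A := LinearMap.ext fun v => funext fun i => by rw [hAcal, sumOp_apply]
  obtain rfl : K = localKernel A := Submodule.ext fun v => (hK v).trans (mem_localKernel A).symm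
  set T := sumOp A + β • LinearMap.id
  subst hKinf
  have hC_eq : ∀ i, C i = (LinearMap.single ℂ _ i ∘ₗ LinearMap.proj i) ∘ₗ T := fun i => by
    rw [hC i]; congr 1; ext v m; simp [heps, Pi.single_apply]
  have hCK : ∀ i, localKernel A ≤ (localKernel A).comap (C i) := fun i => by
    rw [hC_eq i]
    exact (localKernel_le_comap_sumOp_add_smul A β).trans
      (Submodule.comap_mono (localKernel_le_comap_single_comp_proj A i))
  have hCKinf : ∀ i, LinearMap.ker T ≤ (LinearMap.ker T).comap (C i) := fun i => by
    rw [hC_eq i]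
    exact (LinearMap.ker_le_ker_comp T _).trans (LinearMap.ker_le_comap _)
  have hcomap : (localKernel A).comap T = localKernel A ⊔ LinearMap.ker T :=
    comap_sumOp_add_smul_localKernel A hβ
  have hker : LinearMap.ker Abar = (LinearMap.ker T).map (localKernel A).mkQ := by
    rw [show Abar = (localKernel A).mapQ _ T (localKernel_le_comap_sumOp_add_smul A β) from
      Submodule.linearMap_qext _ (LinearMap.ext hAbar), Submodule.ker_mapQ, hcomap,
      Submodule.map_sup, Submodule.mkQ_map_self, bot_sup_eq]
  let Θ := Submodule.quotEquivOfEq _ _ hker ≪≫ₗ Submodule.quotientQuotientEquivQuotientSup _ _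
  have hΘ : ∀ v, Θ ((LinearMap.ker Abar).mkQ ((localKernel A).mkQ v)) =
      (localKernel A ⊔ LinearMap.ker T).mkQ v := fun _ => rfl
  refine ⟨fun i => ⟨hCK i, hCKinf i, sup_le ((hCK i).trans (Submodule.comap_mono le_sup_left))
      ((hCKinf i).trans (Submodule.comap_mono le_sup_right))⟩,
    fun v => SetLike.ext_iff.mp hcomap v, hker, Θ, hΘ,
    fun i C1 hC1 C2 hC2 => Submodule.intertwines_of_mkQ_mkQ hΘ hC1 hC2⟩

/-- Section 5.  The middle convolution via the middle Laplace
transform agrees with Dettweiler–Reiter's: for `β ≠ 0`, (a) each `C_i` preserves `K`,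
`K_∞` and `K + K_∞`; (b) `(A + β)v ∈ K ↔ v ∈ K + K_∞`, so the kernel of the
endomorphism induced by `A + β` on `(ℂ^N)^q/K` is the image of `K_∞`; (c) there is a
linear isomorphism `Θ : ((ℂ^N)^q/K)/ker(A+β)‾ → (ℂ^N)^q/(K + K_∞)` compatible with the
quotient maps and intertwining the endomorphisms induced by each `C_i`. -/
theorem middle_convolution_agrees_with_DR
    (N q : ℕ) (hN : 1 ≤ N) (hq : 1 ≤ q)
    (A : Fin q → Matrix (Fin N) (Fin N) ℂ) (β : ℂ) (hβ : β ≠ 0)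
    (Acal : (Fin q → Fin N → ℂ) →ₗ[ℂ] (Fin q → Fin N → ℂ))
    (hAcal : ∀ v i, Acal v i = ∑ k, (A k) *ᵥ v k)
    (eps : Fin q → ((Fin q → Fin N → ℂ) →ₗ[ℂ] (Fin q → Fin N → ℂ)))
    (heps : ∀ i v m, eps i v m = if m = i then v i else 0)
    (C : Fin q → ((Fin q → Fin N → ℂ) →ₗ[ℂ] (Fin q → Fin N → ℂ)))
    (hC : ∀ i, C i = (eps i) ∘ₗ (Acal + β • LinearMap.id))
    (K : Submodule ℂ (Fin q → Fin N → ℂ))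
    (hK : ∀ v, v ∈ K ↔ ∀ i, (A i) *ᵥ v i = 0)
    (Kinf : Submodule ℂ (Fin q → Fin N → ℂ))
    (hKinf : Kinf = LinearMap.ker (Acal + β • LinearMap.id))
    (Abar : ((Fin q → Fin N → ℂ) ⧸ K) →ₗ[ℂ] ((Fin q → Fin N → ℂ) ⧸ K))
    (hAbar : ∀ v, Abar (K.mkQ v) = K.mkQ (Acal v + β • v)) :
    (∀ i, (∀ v ∈ K, C i v ∈ K) ∧ (∀ v ∈ Kinf, C i v ∈ Kinf) ∧
      (∀ v ∈ K ⊔ Kinf, C i v ∈ K ⊔ Kinf)) ∧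
    (∀ v, Acal v + β • v ∈ K ↔ v ∈ K ⊔ Kinf) ∧
    (LinearMap.ker Abar = Submodule.map K.mkQ Kinf) ∧
    (∃ Θ : (((Fin q → Fin N → ℂ) ⧸ K) ⧸ LinearMap.ker Abar) ≃ₗ[ℂ]
        ((Fin q → Fin N → ℂ) ⧸ (K ⊔ Kinf)),
      (∀ v, Θ ((LinearMap.ker Abar).mkQ (K.mkQ v)) = (K ⊔ Kinf).mkQ v) ∧
      (∀ i,
        ∀ (C1 : (((Fin q → Fin N → ℂ) ⧸ K) ⧸ LinearMap.ker Abar) →ₗ[ℂ]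
            (((Fin q → Fin N → ℂ) ⧸ K) ⧸ LinearMap.ker Abar)),
          (∀ v, C1 ((LinearMap.ker Abar).mkQ (K.mkQ v)) =
            (LinearMap.ker Abar).mkQ (K.mkQ (C i v))) →
        ∀ (C2 : ((Fin q → Fin N → ℂ) ⧸ (K ⊔ Kinf)) →ₗ[ℂ]
            ((Fin q → Fin N → ℂ) ⧸ (K ⊔ Kinf))),
          (∀ v, C2 ((K ⊔ Kinf).mkQ v) = (K ⊔ Kinf).mkQ (C i v)) →
        ∀ w, Θ (C1 w) = C2 (Θ w))) :=
  middle_convolution_agrees_with_DR_general N q A β hβ Acal hAcal eps heps C hC K hK Kinf hKinf Abar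
    hAbar
end
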